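/- Let S = X₁X₂…X_m be a sequence over {O,U} of even length m ≥ 2 with X₁ = X_m, and let S' = X₂…X_{m−1} be the sequence obtained from S by deleting the first and last letters (a cyclic reduction of the cyclically adjacent equal pair). Then |Φ(S')| = |Φ(S)|. -/
import Mathlib


/-- The two-letter alphabet {O, U}. -/
inductive OULetter : Type
  | O : OULetter
  | U : OULetter
deriving DecidableEq

open OULetter

/-- The sign `ε` of the letter `X` at the (1-indexed) position `i`:
`+1` if (`X = O` and `i` is even) or (`X = U` and `i` is odd), and `-1` otherwise. -/
def eps (X : OULetter) (i : ℕ) : ℤ :=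
  match X with
  | O => if i % 2 = 0 then 1 else -1
  | U => if i % 2 = 1 then 1 else -1

/-- The sign sum `Σ_{i=1}^m ε(X_i)` of a sequence `S = X₁X₂…X_m`. -/
def signSum (S : List OULetter) : ℤ :=
  ∑ j : Fin S.length, eps (S.get j) (j.1 + 1)

/-- The OU number `Φ(S) = (1/2)·Σ_{i=1}^m ε(X_i)` of a sequence `S`. -/
def Phi (S : List OULetter) : ℚ := (signSum S : ℚ) / 2

/-- Sign sum with positions offset by `n`. -/
def gsum (S : List OULetter) (n : ℕ) : ℤ :=
  ∑ j : Fin S.length, eps (S.get j) (j.1 + n)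

lemma eps_succ (X : OULetter) (n : ℕ) : eps X (n + 1) = - eps X n := by
  cases X <;> simp only [eps] <;> rcases Nat.mod_two_eq_zero_or_one n with h | h <;>
    simp [Nat.add_mod, h]

lemma gsum_nil (n : ℕ) : gsum [] n = 0 := by simp [gsum]

lemma gsum_cons (a : OULetter) (l : List OULetter) (n : ℕ) :
    gsum (a :: l) n = eps a n + gsum l (n + 1) := by
  simp only [gsum, List.length_cons, Fin.sum_univ_succ, List.get_cons_zero, Fin.val_zero,
    zero_add, List.get_cons_succ, Fin.val_succ]
  congr 1
  apply Finset.sum_congr rfl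
  intro j _
  congr 1
  omega

lemma gsum_succ (l : List OULetter) (n : ℕ) : gsum l (n + 1) = - gsum l n := by
  induction l generalizing n with
  | nil => simp [gsum_nil]
  | cons a t ih =>
    rw [gsum_cons, gsum_cons, eps_succ, ih (n + 1), ih n]
    ring

lemma gsum_append (l₁ l₂ : List OULetter) (n : ℕ) :
    gsum (l₁ ++ l₂) n = gsum l₁ n + gsum l₂ (n + l₁.length) := by
  induction l₁ generalizing n with
  | nil => simp [gsum_nil]
  | cons a t ih =>
    rw [List.cons_append, gsum_cons, gsum_cons, ih, add_assoc]
    have : n + (1 + t.length) = n + (a :: t).length := by simp [Nat.add_comm]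
    rw [this]
    ring

lemma signSum_eq (S : List OULetter) : signSum S = gsum S 1 := rfl

lemma eps_mod (X : OULetter) (n m : ℕ) (h : n % 2 = m % 2) : eps X n = eps X m := by
  cases X <;> simp [eps, h]

/-- For a sequence of even length whose first and last letters agree, deleting those two
letters (a cyclic reduction) preserves the absolute value of the OU number. -/
theorem abs_phi_cyclic_reduction (X : OULetter) (mid : List OULetter)
    (heven : Even ([X] ++ mid ++ [X]).length) :
    |Phi mid| = |Phi ([X] ++ mid ++ [X])| := by
  have hm : mid.length % 2 = 0 := by
    obtain ⟨k, hk⟩ := heven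
    simp [List.length_append] at hk
    omega
  have key : signSum ([X] ++ mid ++ [X]) = - signSum mid := by
    rw [signSum_eq, signSum_eq, gsum_append, gsum_append, gsum_cons, gsum_nil, gsum_cons,
      gsum_nil]
    have h1 : eps X (1 + ([X] ++ mid).length) = - eps X 1 := by
      have : eps X (1 + ([X] ++ mid).length) = eps X 2 := by
        apply eps_mod
        simp only [List.length_append, List.length_cons, List.length_nil, List.length_singleton]
        simp [Nat.add_mod, hm]
      rw [this, show (2 : ℕ) = 1 + 1 from rfl, eps_succ]
    rw [show (1 + [X].length) = 2 from rfl, h1]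
    have h2 : gsum mid 2 = - gsum mid 1 := gsum_succ mid 1
    rw [h2]
    ring
  unfold Phi
  rw [key]
  push_cast
  rw [neg_div, abs_neg]
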